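/- Let R be a commutative strongly ℤ-graded ring with grading 𝒜, let k ∈ ℤ, and let Q be an R-module. Then the 𝒜 0-linear map Q ⊗[𝒜 0] 𝒜 k → Q given by x ⊗ r ↦ r • x is bijective, where Q is regarded as an 𝒜 0-module by restriction of scalars. -/

import Mathlib

open TensorProduct

/-- A ℤ-graded ring is *strongly graded* if `𝒜 i * 𝒜 j = 𝒜 (i + j)` for all `i j`. -/
def IsStronglyGraded {R : Type*} [Ring R] (𝒜 : ℤ → Submodule ℤ R) : Prop :=
  ∀ i j : ℤ, 𝒜 i * 𝒜 j = 𝒜 (i + j)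

variable {R : Type*} [CommRing R] (𝒜 : ℤ → Submodule ℤ R) [GradedRing 𝒜]

/-- The homogeneous component `𝒜 n` is a module over the subring `𝒜 0`,
with the action given by multiplication in `R`. -/
instance gradeLeftModule (n : ℤ) : Module (𝒜 0) (𝒜 n) where
  smul a x := ⟨(a : R) * x, by simpa using SetLike.mul_mem_graded a.2 x.2⟩
  one_smul x := Subtype.ext (one_mul _)
  mul_smul a b x := Subtype.ext (mul_assoc _ _ _)
  smul_zero a := Subtype.ext (mul_zero _)
  smul_add a x y := Subtype.ext (mul_add _ _ _)
  add_smul a b x := Subtype.ext (add_mul _ _ _)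
  zero_smul x := Subtype.ext (zero_mul _)

/-- The inclusion of the subring `𝒜 0` into `R`. -/
def incl0 : (𝒜 0) →+* R where
  toFun a := (a : R)
  map_one' := rfl
  map_mul' _ _ := rfl
  map_zero' := rfl
  map_add' _ _ := rfl

/-- Every `R`-module is a module over `𝒜 0` by restriction of scalars along
the inclusion `𝒜 0 → R`. -/
instance restrictGradeZeroModule (Q : Type*) [AddCommMonoid Q] [Module R Q] :
    Module (𝒜 0) Q :=
  Module.compHom Q (incl0 𝒜)

/-!
By strong grading, `1 = ∑ aᵢ * bᵢ` with `aᵢ ∈ 𝒜 k` and `bᵢ ∈ 𝒜 (-k)`, and `x ↦ ∑ (bᵢ • x) ⊗ aᵢ`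
is inverse to `g`: on `x ⊗ r` it gives `∑ x ⊗ (bᵢ * r) • aᵢ = x ⊗ r`, because `bᵢ * r ∈ 𝒜 0`
may be moved across the tensor sign. Instead of choosing such a decomposition, note that the
scalars `s` for which `g` is invertible up to `s` are closed under addition and contain every
product `a * b`; by induction on `𝒜 k * 𝒜 (-k)` they contain `1`.
-/

namespace LinearMap

variable {S M N : Type*} [CommSemiring S] [AddCommMonoid M] [AddCommMonoid N] [Module S M]
  [Module S N]

def HasSMulInverse (f : M →ₗ[S] N) (s : S) : Prop :=
  ∃ f' : N →ₗ[S] M, f ∘ₗ f' = s • LinearMap.id ∧ f' ∘ₗ f = s • LinearMap.id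

theorem HasSMulInverse.add {f : M →ₗ[S] N} {s t : S} (hs : f.HasSMulInverse s)
    (ht : f.HasSMulInverse t) : f.HasSMulInverse (s + t) := by
  obtain ⟨f₁, h₁, h₁'⟩ := hs
  obtain ⟨f₂, h₂, h₂'⟩ := ht
  exact ⟨f₁ + f₂, by rw [comp_add, h₁, h₂, add_smul], by rw [add_comp, h₁', h₂', add_smul]⟩

theorem HasSMulInverse.bijective {f : M →ₗ[S] N} (hf : f.HasSMulInverse 1) :
    Function.Bijective f := by
  obtain ⟨f', h, h'⟩ := hf
  rw [one_smul] at h h'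
  exact Function.bijective_iff_has_inverse.mpr ⟨f', LinearMap.congr_fun h', LinearMap.congr_fun h⟩

end LinearMap

section

variable {𝒜}

@[simp] lemma coe_gradeZero_smul_grade {n : ℤ} (c : 𝒜 0) (r : 𝒜 n) :
    ((c • r : 𝒜 n) : R) = c * r := rfl

lemma mul_mem_grade_zero {i j : ℤ} {a b : R} (ha : a ∈ 𝒜 i) (hb : b ∈ 𝒜 j) (hij : i + j = 0) :
    a * b ∈ 𝒜 0 :=
  hij ▸ SetLike.mul_mem_graded ha hb

lemma mul_grade_neg_le_grade_zero (k : ℤ) : 𝒜 k * 𝒜 (-k) ≤ 𝒜 0 :=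
  Submodule.mul_le.mpr fun _ ha _ hb => mul_mem_grade_zero ha hb (add_neg_cancel k)

lemma one_mem_mul_grade_neg (h : IsStronglyGraded 𝒜) (k : ℤ) : (1 : R) ∈ 𝒜 k * 𝒜 (-k) := by
  rw [h, add_neg_cancel]
  exact SetLike.one_mem_graded 𝒜

variable {Q : Type*} [AddCommMonoid Q] [Module R Q]

lemma gradeZero_smul_eq_coe_smul (c : 𝒜 0) (x : Q) : c • x = (c : R) • x := rfl

@[simps]
def gradeZeroLinearSMul (b : R) : Q →ₗ[𝒜 0] Q where
  toFun x := b • x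
  map_add' := smul_add b
  map_smul' c x := smul_comm b (c : R) x

variable {k : ℤ} {g : Q ⊗[𝒜 0] 𝒜 k →ₗ[𝒜 0] Q} (hg : ∀ (x : Q) (r : 𝒜 k), g (x ⊗ₜ r) = (r : R) • x)
include hg

lemma hasSMulInverse_mul {a b : R} (ha : a ∈ 𝒜 k) (hb : b ∈ 𝒜 (-k)) :
    g.HasSMulInverse ⟨a * b, mul_grade_neg_le_grade_zero k (Submodule.mul_mem_mul ha hb)⟩ := by
  refine ⟨(TensorProduct.mk (𝒜 0) Q (𝒜 k)).flip ⟨a, ha⟩ ∘ₗ gradeZeroLinearSMul b, ?_, ?_⟩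
  · ext x
    simp only [LinearMap.comp_apply, gradeZeroLinearSMul_apply, LinearMap.flip_apply, mk_apply, hg,
      LinearMap.smul_apply, LinearMap.id_apply, gradeZero_smul_eq_coe_smul, smul_smul]
  · refine TensorProduct.ext' fun x r => ?_
    have hbr : b * r ∈ 𝒜 0 := mul_mem_grade_zero hb r.2 (neg_add_cancel k)
    calc ((TensorProduct.mk (𝒜 0) Q (𝒜 k)).flip ⟨a, ha⟩ ∘ₗ gradeZeroLinearSMul b ∘ₗ g) (x ⊗ₜ r)
        = (b • (r : R) • x) ⊗ₜ[𝒜 0] (⟨a, ha⟩ : 𝒜 k) := by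
          simp only [LinearMap.comp_apply, hg, gradeZeroLinearSMul_apply, LinearMap.flip_apply,
            mk_apply]
      _ = ((⟨b * r, hbr⟩ : 𝒜 0) • x) ⊗ₜ ⟨a, ha⟩ := by rw [gradeZero_smul_eq_coe_smul, smul_smul]
      _ = x ⊗ₜ ((⟨b * r, hbr⟩ : 𝒜 0) • ⟨a, ha⟩) := smul_tmul _ _ _
      _ = x ⊗ₜ ((⟨a * b, _⟩ : 𝒜 0) • r) := by congr 1; ext; simp only [coe_gradeZero_smul_grade]; ring
      _ = _ := tmul_smul _ _ _

lemma hasSMulInverse_of_mem_mul {s : R} (hs : s ∈ 𝒜 k * 𝒜 (-k)) :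
    g.HasSMulInverse ⟨s, mul_grade_neg_le_grade_zero k hs⟩ := by
  induction hs using Submodule.mul_induction_on' with
  | mem_mul_mem a ha b hb => exact hasSMulInverse_mul hg ha hb
  | add x hx y hy ihx ihy => exact ihx.add ihy

end

/-- For a commutative strongly ℤ-graded ring and `Q` an `R`-module, the
`𝒜 0`-linear map `Q ⊗[𝒜 0] 𝒜 k → Q`, `x ⊗ r ↦ r • x`, is bijective. -/
theorem tensor_grade_to_module_bijective (h : IsStronglyGraded 𝒜) (k : ℤ)
    (Q : Type*) [AddCommGroup Q] [Module R Q]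
    (g : (Q ⊗[𝒜 0] 𝒜 k) →ₗ[𝒜 0] Q)
    (hg : ∀ (x : Q) (r : 𝒜 k), g (x ⊗ₜ r) = (r : R) • x) :
    Function.Bijective g :=
  (hasSMulInverse_of_mem_mul hg (one_mem_mul_grade_neg h k)).bijective
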